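/- arXiv:1804.02578 — 3 statements merged into one kernel-verified Lean document; each statement's English description precedes it below -/
import Mathlib

section
/- Let min(k,ℓ) ≥ 3 and let ρ = [a_1,...,a_{(k-1)(ℓ-1)}] be a permutation of {1,...,(k-1)(ℓ-1)} with no increasing linear subsequence of length k and no decreasing linear subsequence of length ℓ, such that viewed as a cyclic permutation it has no increasing cyclic sub-permutation of length k+1 and no decreasing cyclic sub-permutation of length ℓ+1. Then either a_{(j-1)(ℓ-1)+i} = (ℓ-1-i)(k-1)+j for all i ∈ [ℓ-1], j ∈ [k-1], or a_{(i-1)(k-1)+j} = (j-1)(ℓ-1)+(ℓ-i) for all i ∈ [ℓ-1], j ∈ [k-1]. -/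
/-!
Put `K = k - 1` and `L = ℓ - 1`, and label every position by the lengths of the longest increasing
and the longest decreasing subsequence ending there (Erdős–Szekeres). Distinct positions get
distinct labels in `[1, K] × [1, L]`, so for a permutation of length `K * L` the labelling is a
bijection onto this grid; along a grid row positions increase and values decrease, along a grid
column both increase.

Suppose the minimum value occurs before the maximum one. The bound on cyclically decreasing
subsequences, applied to the first and last grid rows, makes every value in a grid column smaller
than every value in the columns to its left; with this, the bound on cyclically increasing
subsequences shows that every cell of a grid row precedes every cell of the next one, so positions
fill the grid row by row. The two decreasing bounds, applied to pieces of two rows, then order the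
values lexicographically by (reversed column, row): this is the first pattern.

If the maximum occurs first, two full grid columns show that the first value of the permutation
is smaller than the last one, i.e. the inverse permutation has its minimum first. All hypotheses
pass to the inverse, which therefore has the first pattern, and the permutation the second.
-/

/-- The cyclic permutation represented by list `c` has an increasing cyclic
sub-permutation of length `m`: some rotation of `c` has a strictly increasing
sublist of length `m`. -/
def IncCycSub (c : List ℕ) (m : ℕ) : Prop :=
  ∃ (r : ℕ) (s : List ℕ), s.Sublist (c.rotate r) ∧ s.length = m ∧ s.Pairwise (· < ·)

/-- Decreasing cyclic sub-permutation of length `m`. -/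
def DecCycSub (c : List ℕ) (m : ℕ) : Prop :=
  ∃ (r : ℕ) (s : List ℕ), s.Sublist (c.rotate r) ∧ s.length = m ∧ s.Pairwise (· > ·)

open Finset OrderDual

theorem eq_of_strictMono_of_surjective {α γ : Type*} [LinearOrder α] [WellFoundedLT α]
    [Preorder γ] {f g : α → γ} (hf : StrictMono f) (hg : StrictMono g)
    (hf' : Function.Surjective f) (hg' : Function.Surjective g) : f = g :=
  (hf.range_inj hg).1 (by rw [hf'.range_eq, hg'.range_eq])

theorem strictMonoOn_image_of_strictMono_comp {γ ι β : Type*} [LinearOrder γ] [LinearOrder ι]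
    [Preorder β] {f : ι → β} {p : γ → ι} (hp : StrictMono p) (hfp : StrictMono (f ∘ p))
    (s : Set γ) : StrictMonoOn f (p '' s) := by
  rintro _ ⟨a, -, rfl⟩ _ ⟨b, -, rfl⟩ hab
  exact hfp (hp.lt_iff_lt.1 hab)

theorem strictMono_finProdFinEquiv_ofLex {m n : ℕ} :
    StrictMono fun x : Fin m ×ₗ Fin n => finProdFinEquiv (ofLex x) := by
  intro x y hlt
  rw [Fin.lt_def, finProdFinEquiv_apply_val, finProdFinEquiv_apply_val]
  rcases Prod.Lex.lt_iff.1 hlt with ha | ⟨ha, hb⟩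
  · have hle := Nat.mul_le_mul_left n (Fin.lt_def.1 ha)
    have := (ofLex x).2.isLt
    rw [Nat.mul_succ] at hle
    omega
  · rw [ha]
    exact Nat.add_lt_add_right hb _

/-- Position `r * L + c` carries the value `r + K * (L - 1 - c)` (counting from `0`): this is the
first pattern of the theorem, and its inverse is the second one. -/
def extremalPerm (K L : ℕ) : Equiv.Perm (Fin (K * L)) :=
  finProdFinEquiv.symm.trans <|
    ((Equiv.prodComm _ _).trans (Equiv.prodCongr Fin.revPerm (Equiv.refl _))).trans <|
      finProdFinEquiv.trans (finCongr (Nat.mul_comm L K))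

theorem extremalPerm_finProdFinEquiv {K L : ℕ} (r : Fin K) (c : Fin L) :
    extremalPerm K L (finProdFinEquiv (r, c)) =
      finCongr (Nat.mul_comm L K) (finProdFinEquiv (c.rev, r)) := by
  simp [extremalPerm]

theorem val_extremalPerm_finProdFinEquiv {K L : ℕ} (r : Fin K) (c : Fin L) :
    (extremalPerm K L (finProdFinEquiv (r, c)) : ℕ) = r + K * (L - 1 - c) := by
  simp only [extremalPerm_finProdFinEquiv, finCongr_apply, Fin.val_cast, finProdFinEquiv_apply_val,
    Fin.val_rev]
  rw [Nat.sub_add_eq, Nat.sub_right_comm]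

section Chains

variable {ι β : Type*} [LinearOrder ι] [Fintype ι] [LinearOrder β]

open scoped Classical in
noncomputable def incChainLen (f : ι → β) (x : ι) : ℕ :=
  ((univ : Finset (Finset ι)).filter fun s : Finset ι =>
    StrictMonoOn f s ∧ IsGreatest (s : Set ι) x).sup card

variable {f : ι → β}

theorem card_le_incChainLen {s : Finset ι} {x : ι} (hs : StrictMonoOn f s)
    (hx : IsGreatest (s : Set ι) x) : #s ≤ incChainLen f x := by
  classical
  exact le_sup (f := card) (by simp [hs, hx])

theorem exists_card_eq_incChainLen (x : ι) :
    ∃ s : Finset ι, StrictMonoOn f s ∧ IsGreatest (s : Set ι) x ∧ #s = incChainLen f x := by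
  classical
  obtain ⟨s, hs, hcard⟩ := exists_mem_eq_sup
    ((univ : Finset (Finset ι)).filter fun s : Finset ι =>
      StrictMonoOn f s ∧ IsGreatest (s : Set ι) x)
    ⟨{x}, by simp⟩ card
  simp only [mem_filter, mem_univ, true_and] at hs
  exact ⟨s, hs.1, hs.2, by rw [incChainLen, hcard]⟩

theorem one_le_incChainLen (x : ι) : 1 ≤ incChainLen f x :=
  card_le_incChainLen (s := {x}) (by simp) (by simp)

theorem incChainLen_le {K : ℕ} (h : ∀ s : Finset ι, StrictMonoOn f s → #s ≤ K) (x : ι) :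
    incChainLen f x ≤ K := by
  obtain ⟨s, hs, -, hcard⟩ := exists_card_eq_incChainLen (f := f) x
  exact hcard ▸ h s hs

theorem incChainLen_lt_incChainLen {x y : ι} (hxy : x < y) (hf : f x < f y) :
    incChainLen f x < incChainLen f y := by
  obtain ⟨s, hs, hx, hcard⟩ := exists_card_eq_incChainLen (f := f) x
  have hy : y ∉ s := fun hy => (hx.2 hy).not_gt hxy
  have hchain : StrictMonoOn f (insert y s : Finset ι) := by
    rw [coe_insert, strictMonoOn_insert_iff_of_forall_le fun z hz => (hx.2 hz).trans hxy.le]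
    exact ⟨fun z hz _ => (hs.monotoneOn hz hx.1 (hx.2 hz)).trans_lt hf, hs⟩
  have hgreat : IsGreatest ((insert y s : Finset ι) : Set ι) y := by
    refine ⟨by simp, fun z hz => ?_⟩
    rcases (by simpa using hz : z = y ∨ z ∈ s) with rfl | hz
    · exact le_rfl
    · exact (hx.2 hz).trans hxy.le
  have := card_le_incChainLen hchain hgreat
  rw [card_insert_of_notMem hy] at this
  omega

theorem incChainLen_lt_or_dual_lt (hf : Function.Injective f) {x y : ι} (hxy : x < y) :
    (f x < f y ∧ incChainLen f x < incChainLen f y) ∨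
      (f y < f x ∧ incChainLen (toDual ∘ f) x < incChainLen (toDual ∘ f) y) := by
  rcases lt_or_gt_of_ne (hf.ne hxy.ne) with hv | hv
  · exact .inl ⟨hv, incChainLen_lt_incChainLen hxy hv⟩
  · exact .inr ⟨hv, incChainLen_lt_incChainLen (f := toDual ∘ f) hxy (toDual_lt_toDual.2 hv)⟩

theorem lt_and_lt_of_incChainLen_lt (hf : Function.Injective f) {x y : ι}
    (hC : incChainLen (toDual ∘ f) x = incChainLen (toDual ∘ f) y)
    (hR : incChainLen f x < incChainLen f y) : x < y ∧ f x < f y := by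
  rcases lt_trichotomy x y with hxy | rfl | hyx
  · rcases incChainLen_lt_or_dual_lt hf hxy with h | h
    · exact ⟨hxy, h.1⟩
    · omega
  · omega
  · rcases incChainLen_lt_or_dual_lt hf hyx with h | h <;> omega

theorem lt_and_lt_of_dual_incChainLen_lt (hf : Function.Injective f) {x y : ι}
    (hR : incChainLen f x = incChainLen f y)
    (hC : incChainLen (toDual ∘ f) x < incChainLen (toDual ∘ f) y) : x < y ∧ f y < f x := by
  rcases lt_trichotomy x y with hxy | rfl | hyx
  · rcases incChainLen_lt_or_dual_lt hf hxy with h | h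
    · omega
    · exact ⟨hxy, h.1⟩
  · omega
  · rcases incChainLen_lt_or_dual_lt hf hyx with h | h <;> omega

theorem injective_incChainLen_prod (hf : Function.Injective f) :
    Function.Injective fun x => (incChainLen f x, incChainLen (toDual ∘ f) x) := by
  intro x y hxy
  simp only [Prod.mk.injEq] at hxy
  by_contra hne
  rcases lt_or_gt_of_ne hne with h | h <;>
    rcases incChainLen_lt_or_dual_lt hf h with h | h <;> omega

end Chains

section Cyclic

variable {ι β : Type*} [LinearOrder ι] [LinearOrder β]

/-- `f` has no increasing subsequence of length `K + 1` and no cyclically increasing one of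
length `K + 2`. Cut at the point where it wraps around, a cyclically increasing subsequence is an
increasing `t` followed by an increasing `s` that lies before `t` and above it. -/
structure CyclicIncBound (f : ι → β) (K : ℕ) : Prop where
  card_le : ∀ s : Finset ι, StrictMonoOn f s → #s ≤ K
  card_add_card_le : ∀ s t : Finset ι, StrictMonoOn f s → StrictMonoOn f t →
    (∀ x ∈ s, ∀ y ∈ t, x < y ∧ f y < f x) → #s + #t ≤ K + 1

structure CyclicESBound (f : ι → β) (K L : ℕ) : Prop where
  inc : CyclicIncBound f K
  dec : CyclicIncBound (toDual ∘ f) L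

variable {f : ι → β} {K : ℕ}

theorem CyclicIncBound.card_add_card_le_of_lt (h : CyclicIncBound f K) {s t : Finset ι}
    (hs : StrictMonoOn f s) (ht : StrictMonoOn f t) (hst : ∀ x ∈ s, ∀ y ∈ t, x < y ∧ f x < f y) :
    #s + #t ≤ K := by
  have hdisj : Disjoint s t :=
    disjoint_left.2 fun x hxs hxt => (hst x hxs x hxt).1.false
  rw [← card_union_of_disjoint hdisj]
  refine h.card_le _ fun x hx y hy hxy => ?_
  simp only [coe_union, Set.mem_union, mem_coe] at hx hy
  rcases hx with hx | hx <;> rcases hy with hy | hy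
  · exact hs hx hy hxy
  · exact (hst x hx y hy).2
  · exact absurd hxy (hst y hy x hx).1.asymm
  · exact ht hx hy hxy

theorem strictMonoOn_image_symm (e : ι ≃ β) {s : Set β} (hs : StrictMonoOn e.symm s) :
    StrictMonoOn e (e.symm '' s) := by
  rintro _ ⟨x, hx, rfl⟩ _ ⟨y, hy, rfl⟩ hxy
  simpa using (hs.lt_iff_lt hx hy).1 hxy

theorem strictAntiOn_image_symm (e : ι ≃ β) {s : Set β} (hs : StrictAntiOn e.symm s) :
    StrictAntiOn e (e.symm '' s) := by
  rintro _ ⟨x, hx, rfl⟩ _ ⟨y, hy, rfl⟩ hxy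
  simpa using (hs.lt_iff_gt hx hy).1 hxy

theorem CyclicIncBound.symm {e : ι ≃ β} (h : CyclicIncBound e K) : CyclicIncBound e.symm K where
  card_le s hs := by
    simpa using h.card_le (s.map e.symm.toEmbedding) (by simpa using strictMonoOn_image_symm e hs)
  card_add_card_le s t hs ht hst := by
    have := h.card_add_card_le (t.map e.symm.toEmbedding) (s.map e.symm.toEmbedding)
      (by simpa using strictMonoOn_image_symm e ht) (by simpa using strictMonoOn_image_symm e hs)
      (by
        simp only [mem_map, Equiv.coe_toEmbedding]
        rintro _ ⟨y, hy, rfl⟩ _ ⟨x, hx, rfl⟩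
        simpa using (hst x hx y hy).symm)
    simp only [card_map] at this
    omega

theorem CyclicIncBound.dual_symm {e : ι ≃ β} (h : CyclicIncBound (toDual ∘ e) K) :
    CyclicIncBound (toDual ∘ e.symm) K where
  card_le s hs := by
    rw [strictMonoOn_toDual_comp_iff] at hs
    simpa using h.card_le (s.map e.symm.toEmbedding)
      (by simpa [strictMonoOn_toDual_comp_iff] using strictAntiOn_image_symm e hs)
  card_add_card_le s t hs ht hst := by
    rw [strictMonoOn_toDual_comp_iff] at hs ht
    simpa using h.card_add_card_le (s.map e.symm.toEmbedding) (t.map e.symm.toEmbedding)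
      (by simpa [strictMonoOn_toDual_comp_iff] using strictAntiOn_image_symm e hs)
      (by simpa [strictMonoOn_toDual_comp_iff] using strictAntiOn_image_symm e ht)
      (by
        simp only [mem_map, Equiv.coe_toEmbedding]
        rintro _ ⟨x, hx, rfl⟩ _ ⟨y, hy, rfl⟩
        simpa using (hst x hx y hy).symm)

theorem CyclicESBound.symm {e : ι ≃ β} {L : ℕ} (h : CyclicESBound e K L) :
    CyclicESBound e.symm K L :=
  ⟨h.inc.symm, h.dec.dual_symm⟩

end Cyclic

namespace CyclicESBound

variable {K L : ℕ} {σ : Equiv.Perm (Fin (K * L))} (h : CyclicESBound σ K L)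

noncomputable def label (x : Fin (K * L)) : Fin K × Fin L :=
  (⟨incChainLen σ x - 1, by
      have := one_le_incChainLen (f := σ) x
      have := incChainLen_le h.inc.card_le x
      omega⟩,
    ⟨incChainLen (toDual ∘ σ) x - 1, by
      have := one_le_incChainLen (f := toDual ∘ σ) x
      have := incChainLen_le h.dec.card_le x
      omega⟩)

theorem label_bijective : Function.Bijective h.label := by
  refine (Fintype.bijective_iff_injective_and_card _).2 ⟨fun x y hxy => ?_, by simp⟩
  have h1 := one_le_incChainLen (f := σ) x
  have h2 := one_le_incChainLen (f := σ) y
  have h3 := one_le_incChainLen (f := toDual ∘ σ) x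
  have h4 := one_le_incChainLen (f := toDual ∘ σ) y
  simp only [label, Prod.mk.injEq, Fin.mk.injEq] at hxy
  exact injective_incChainLen_prod σ.injective (by simp only [Prod.mk.injEq]; omega)

noncomputable def pos : Fin K × Fin L ≃ Fin (K * L) :=
  (Equiv.ofBijective _ h.label_bijective).symm

theorem label_pos (p : Fin K × Fin L) : h.label (h.pos p) = p :=
  (Equiv.ofBijective _ h.label_bijective).apply_symm_apply p

theorem incChainLen_pos (r : Fin K) (c : Fin L) : incChainLen σ (h.pos (r, c)) = r + 1 := by
  have := congrArg (fun p => (p.1 : ℕ)) (h.label_pos (r, c))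
  have := one_le_incChainLen (f := σ) (h.pos (r, c))
  simp only [label] at *
  omega

theorem dual_incChainLen_pos (r : Fin K) (c : Fin L) :
    incChainLen (toDual ∘ σ) (h.pos (r, c)) = c + 1 := by
  have := congrArg (fun p => (p.2 : ℕ)) (h.label_pos (r, c))
  have := one_le_incChainLen (f := toDual ∘ σ) (h.pos (r, c))
  simp only [label] at *
  omega

theorem lt_and_apply_lt_of_fst_lt (c : Fin L) {r r' : Fin K} (hr : r < r') :
    h.pos (r, c) < h.pos (r', c) ∧ σ (h.pos (r, c)) < σ (h.pos (r', c)) :=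
  lt_and_lt_of_incChainLen_lt σ.injective (by simp only [dual_incChainLen_pos])
    (by simpa only [incChainLen_pos, add_lt_add_iff_right, Fin.val_fin_lt] using hr)

theorem lt_and_apply_gt_of_snd_lt (r : Fin K) {c c' : Fin L} (hc : c < c') :
    h.pos (r, c) < h.pos (r, c') ∧ σ (h.pos (r, c')) < σ (h.pos (r, c)) :=
  lt_and_lt_of_dual_incChainLen_lt σ.injective (by simp only [incChainLen_pos])
    (by simpa only [dual_incChainLen_pos, add_lt_add_iff_right, Fin.val_fin_lt] using hc)

theorem strictMono_pos_fst (c : Fin L) : StrictMono fun r => h.pos (r, c) :=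
  fun _ _ hr => (h.lt_and_apply_lt_of_fst_lt c hr).1

theorem strictMono_apply_pos_fst (c : Fin L) : StrictMono fun r => σ (h.pos (r, c)) :=
  fun _ _ hr => (h.lt_and_apply_lt_of_fst_lt c hr).2

theorem strictMono_pos_snd (r : Fin K) : StrictMono fun c => h.pos (r, c) :=
  fun _ _ hc => (h.lt_and_apply_gt_of_snd_lt r hc).1

theorem strictAnti_apply_pos_snd (r : Fin K) : StrictAnti fun c => σ (h.pos (r, c)) :=
  fun _ _ hc => (h.lt_and_apply_gt_of_snd_lt r hc).2

noncomputable def column (c : Fin L) (R : Finset (Fin K)) : Finset (Fin (K * L)) :=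
  R.image fun r => h.pos (r, c)

noncomputable def row (r : Fin K) (C : Finset (Fin L)) : Finset (Fin (K * L)) :=
  C.image fun c => h.pos (r, c)

theorem card_column (c : Fin L) (R : Finset (Fin K)) : #(h.column c R) = #R :=
  card_image_of_injective _ (h.strictMono_pos_fst c).injective

theorem card_row (r : Fin K) (C : Finset (Fin L)) : #(h.row r C) = #C :=
  card_image_of_injective _ (h.strictMono_pos_snd r).injective

theorem strictMonoOn_column (c : Fin L) (R : Finset (Fin K)) :
    StrictMonoOn σ (h.column c R) := by
  rw [column, coe_image]
  exact strictMonoOn_image_of_strictMono_comp (h.strictMono_pos_fst c)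
    (h.strictMono_apply_pos_fst c) _

theorem strictMonoOn_row (r : Fin K) (C : Finset (Fin L)) :
    StrictMonoOn (toDual ∘ σ) (h.row r C) := by
  rw [row, coe_image]
  exact strictMonoOn_image_of_strictMono_comp (h.strictMono_pos_snd r)
    ((strictMono_toDual_comp_iff (f := fun c => σ (h.pos (r, c)))).2
      (h.strictAnti_apply_pos_snd r)) _

section Corners

variable [NeZero K] [NeZero L]

theorem pos_bot_bot : h.pos (⊥, ⊥) = ⊥ := by
  obtain ⟨⟨r, c⟩, hx⟩ := h.pos.surjective ⊥
  refine le_bot_iff.1 ?_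
  calc h.pos (⊥, ⊥) ≤ h.pos (⊥, c) := (h.strictMono_pos_snd ⊥).monotone bot_le
    _ ≤ h.pos (r, c) := (h.strictMono_pos_fst c).monotone bot_le
    _ = ⊥ := hx

theorem pos_top_top : h.pos (⊤, ⊤) = ⊤ := by
  obtain ⟨⟨r, c⟩, hx⟩ := h.pos.surjective ⊤
  refine top_le_iff.1 ?_
  calc ⊤ = h.pos (r, c) := hx.symm
    _ ≤ h.pos (r, ⊤) := (h.strictMono_pos_snd r).monotone le_top
    _ ≤ h.pos (⊤, ⊤) := (h.strictMono_pos_fst ⊤).monotone le_top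

theorem symm_bot_eq : σ.symm ⊥ = h.pos (⊥, ⊤) := by
  obtain ⟨⟨r, c⟩, hx⟩ := h.pos.surjective (σ.symm ⊥)
  refine σ.symm_apply_eq.2 (le_bot_iff.1 ?_).symm
  calc σ (h.pos (⊥, ⊤)) ≤ σ (h.pos (⊥, c)) := (h.strictAnti_apply_pos_snd ⊥).antitone le_top
    _ ≤ σ (h.pos (r, c)) := (h.strictMono_apply_pos_fst c).monotone bot_le
    _ = ⊥ := by rw [hx, σ.apply_symm_apply]

theorem symm_top_eq : σ.symm ⊤ = h.pos (⊤, ⊥) := by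
  obtain ⟨⟨r, c⟩, hx⟩ := h.pos.surjective (σ.symm ⊤)
  refine σ.symm_apply_eq.2 (top_le_iff.1 ?_).symm
  calc ⊤ = σ (h.pos (r, c)) := by rw [hx, σ.apply_symm_apply]
    _ ≤ σ (h.pos (r, ⊥)) := (h.strictAnti_apply_pos_snd r).antitone bot_le
    _ ≤ σ (h.pos (⊤, ⊥)) := (h.strictMono_apply_pos_fst ⊥).monotone le_top

end Corners

end CyclicESBound

namespace CyclicESBound

variable {K L : ℕ} [NeZero K] [NeZero L] {σ : Equiv.Perm (Fin (K * L))}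
  (h : CyclicESBound σ K L)

theorem apply_pos_top_lt_apply_pos_bot (hio : h.pos (⊥, ⊤) < h.pos (⊤, ⊥)) {c c' : Fin L}
    (hc : c' < c) : σ (h.pos (⊤, c)) < σ (h.pos (⊥, c')) := by
  refine (σ.injective.ne (h.pos.injective.ne (by simp [hc.ne']))).lt_or_gt.resolve_right
    fun hlt => ?_
  have := h.dec.card_add_card_le (h.row ⊥ (Ici c')) (h.row ⊤ (Iic c))
    (h.strictMonoOn_row _ _) (h.strictMonoOn_row _ _) ?_
  · rw [card_row, card_row, Fin.card_Ici, Fin.card_Iic] at this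
    omega
  simp only [row, forall_mem_image, mem_Ici, mem_Iic, Function.comp_apply, toDual_lt_toDual]
  intro a ha b hb
  constructor
  · calc h.pos (⊥, a) ≤ h.pos (⊥, ⊤) := (h.strictMono_pos_snd ⊥).monotone le_top
      _ < h.pos (⊤, ⊥) := hio
      _ ≤ h.pos (⊤, b) := (h.strictMono_pos_snd ⊤).monotone bot_le
  · calc σ (h.pos (⊥, a)) ≤ σ (h.pos (⊥, c')) := (h.strictAnti_apply_pos_snd ⊥).antitone ha
      _ < σ (h.pos (⊤, c)) := hlt
      _ ≤ σ (h.pos (⊤, b)) := (h.strictAnti_apply_pos_snd ⊤).antitone hb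

theorem pos_lt_pos_of_fst_lt (hio : h.pos (⊥, ⊤) < h.pos (⊤, ⊥)) {r r' : Fin K} (hr : r < r')
    (c c' : Fin L) : h.pos (r, c) < h.pos (r', c') := by
  rcases le_or_gt c c' with hcc | hcc
  · exact ((h.strictMono_pos_snd r).monotone hcc).trans_lt (h.strictMono_pos_fst c' hr)
  refine (h.pos.injective.ne (by simp [hr.ne])).lt_or_gt.resolve_right fun hlt => ?_
  have := h.inc.card_add_card_le (h.column c' (Iic r')) (h.column c (Ici r))
    (h.strictMonoOn_column _ _) (h.strictMonoOn_column _ _) ?_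
  · rw [card_column, card_column, Fin.card_Iic, Fin.card_Ici] at this
    omega
  simp only [column, forall_mem_image, mem_Ici, mem_Iic]
  intro a ha b hb
  constructor
  · calc h.pos (a, c') ≤ h.pos (r', c') := (h.strictMono_pos_fst c').monotone ha
      _ < h.pos (r, c) := hlt
      _ ≤ h.pos (b, c) := (h.strictMono_pos_fst c).monotone hb
  · calc σ (h.pos (b, c)) ≤ σ (h.pos (⊤, c)) := (h.strictMono_apply_pos_fst c).monotone le_top
      _ < σ (h.pos (⊥, c')) := h.apply_pos_top_lt_apply_pos_bot hio hcc
      _ ≤ σ (h.pos (a, c')) := (h.strictMono_apply_pos_fst c').monotone bot_le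

theorem apply_pos_lt_apply_pos_of_fst_lt_of_snd_le (hio : h.pos (⊥, ⊤) < h.pos (⊤, ⊥))
    {r r' : Fin K} {c c' : Fin L} (hr : r < r') (hc : c' ≤ c) :
    σ (h.pos (r, c)) < σ (h.pos (r', c')) := by
  refine (σ.injective.ne (h.pos.injective.ne (by simp [hr.ne]))).lt_or_gt.resolve_right
    fun hlt => ?_
  have := h.dec.card_add_card_le_of_lt (s := h.row r (Iic c)) (t := h.row r' (Ici c'))
    (h.strictMonoOn_row _ _) (h.strictMonoOn_row _ _) ?_
  · rw [card_row, card_row, Fin.card_Ici, Fin.card_Iic] at this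
    omega
  simp only [row, forall_mem_image, mem_Ici, mem_Iic, Function.comp_apply, toDual_lt_toDual]
  intro a ha b hb
  refine ⟨h.pos_lt_pos_of_fst_lt hio hr a b, ?_⟩
  calc σ (h.pos (r', b)) ≤ σ (h.pos (r', c')) := (h.strictAnti_apply_pos_snd r').antitone hb
    _ < σ (h.pos (r, c)) := hlt
    _ ≤ σ (h.pos (r, a)) := (h.strictAnti_apply_pos_snd r).antitone ha

theorem apply_pos_lt_apply_pos_of_lt_of_lt (hio : h.pos (⊥, ⊤) < h.pos (⊤, ⊥)) {r r' : Fin K}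
    {c c' : Fin L} (hr : r < r') (hc : c < c') : σ (h.pos (r', c')) < σ (h.pos (r, c)) := by
  refine (σ.injective.ne (h.pos.injective.ne (by simp [hr.ne']))).lt_or_gt.resolve_right
    fun hlt => ?_
  have := h.dec.card_add_card_le (h.row r (Ici c)) (h.row r' (Iic c'))
    (h.strictMonoOn_row _ _) (h.strictMonoOn_row _ _) ?_
  · rw [card_row, card_row, Fin.card_Ici, Fin.card_Iic] at this
    omega
  simp only [row, forall_mem_image, mem_Ici, mem_Iic, Function.comp_apply, toDual_lt_toDual]
  intro a ha b hb
  refine ⟨h.pos_lt_pos_of_fst_lt hio hr a b, ?_⟩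
  calc σ (h.pos (r, a)) ≤ σ (h.pos (r, c)) := (h.strictAnti_apply_pos_snd r).antitone ha
    _ < σ (h.pos (r', c')) := hlt
    _ ≤ σ (h.pos (r', b)) := (h.strictAnti_apply_pos_snd r').antitone hb

theorem pos_eq_finProdFinEquiv (hio : h.pos (⊥, ⊤) < h.pos (⊤, ⊥)) :
    h.pos = finProdFinEquiv := by
  have hmono : StrictMono fun x : Fin K ×ₗ Fin L => h.pos (ofLex x) := by
    intro x y hxy
    obtain ⟨⟨r, c⟩, rfl⟩ := toLex.surjective x
    obtain ⟨⟨r', c'⟩, rfl⟩ := toLex.surjective y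
    simp only [ofLex_toLex]
    rcases Prod.Lex.toLex_lt_toLex.1 hxy with hr | ⟨rfl, hc⟩
    · exact h.pos_lt_pos_of_fst_lt hio hr c c'
    · exact h.strictMono_pos_snd r hc
  have := eq_of_strictMono_of_surjective hmono strictMono_finProdFinEquiv_ofLex
    (h.pos.surjective.comp ofLex.surjective) (finProdFinEquiv.surjective.comp ofLex.surjective)
  exact Equiv.ext fun p => congrFun this (toLex p)

theorem strictMono_apply_pos_lex (hio : h.pos (⊥, ⊤) < h.pos (⊤, ⊥)) :
    StrictMono fun x : Fin L ×ₗ Fin K => σ (h.pos ((ofLex x).2, (ofLex x).1.rev)) := by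
  intro x y hxy
  obtain ⟨⟨c, r⟩, rfl⟩ := toLex.surjective x
  obtain ⟨⟨c', r'⟩, rfl⟩ := toLex.surjective y
  simp only [ofLex_toLex]
  rcases Prod.Lex.toLex_lt_toLex.1 hxy with hc | ⟨rfl, hr⟩
  · have hc' : c'.rev < c.rev := Fin.rev_lt_rev.2 hc
    rcases lt_trichotomy r r' with hr | rfl | hr
    · exact h.apply_pos_lt_apply_pos_of_fst_lt_of_snd_le hio hr hc'.le
    · exact h.strictAnti_apply_pos_snd r hc'
    · exact h.apply_pos_lt_apply_pos_of_lt_of_lt hio hr hc'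
  · exact h.strictMono_apply_pos_fst c.rev hr

theorem eq_extremalPerm (h : CyclicESBound σ K L) (hio : σ.symm ⊥ < σ.symm ⊤) :
    σ = extremalPerm K L := by
  rw [h.symm_bot_eq, h.symm_top_eq] at hio
  let ε : Fin L ×ₗ Fin K → Fin (K * L) := fun x =>
    finProdFinEquiv ((ofLex x).2, (ofLex x).1.rev)
  have hε : Function.Surjective ε := by
    intro y
    obtain ⟨⟨r, c⟩, rfl⟩ := finProdFinEquiv.surjective y
    exact ⟨toLex (c.rev, r), by simp [ε]⟩
  have hσ : StrictMono (σ ∘ ε) := by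
    have := h.strictMono_apply_pos_lex hio
    rwa [h.pos_eq_finProdFinEquiv hio] at this
  have hE : StrictMono (extremalPerm K L ∘ ε) := by
    have : extremalPerm K L ∘ ε =
        Fin.cast (Nat.mul_comm L K) ∘ fun x => finProdFinEquiv (ofLex x) := by
      funext x
      simp [ε, extremalPerm_finProdFinEquiv]
    rw [this]
    exact (Fin.cast_strictMono _).comp strictMono_finProdFinEquiv_ofLex
  have := eq_of_strictMono_of_surjective hσ hE (σ.surjective.comp hε)
    ((extremalPerm K L).surjective.comp hε)
  exact Equiv.ext (hε.forall.2 (congrFun this))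

theorem apply_bot_lt_apply_top (h : CyclicESBound σ K L) (hK : 1 < K)
    (hoi : σ.symm ⊤ < σ.symm ⊥) : σ ⊥ < σ ⊤ := by
  have : Nontrivial (Fin K) := Fin.nontrivial_iff_two_le.2 hK
  rw [h.symm_bot_eq, h.symm_top_eq] at hoi
  rw [← h.pos_bot_bot, ← h.pos_top_top]
  refine (σ.injective.ne (h.pos.injective.ne (by simp))).lt_or_gt.resolve_right fun hlt => ?_
  have := h.inc.card_add_card_le (h.column ⊥ univ) (h.column ⊤ univ)
    (h.strictMonoOn_column _ _) (h.strictMonoOn_column _ _) ?_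
  · rw [card_column, card_column, card_univ, Fintype.card_fin] at this
    omega
  simp only [column, forall_mem_image, mem_univ, forall_const]
  intro a b
  constructor
  · calc h.pos (a, ⊥) ≤ h.pos (⊤, ⊥) := (h.strictMono_pos_fst ⊥).monotone le_top
      _ < h.pos (⊥, ⊤) := hoi
      _ ≤ h.pos (b, ⊤) := (h.strictMono_pos_fst ⊤).monotone bot_le
  · calc σ (h.pos (b, ⊤)) ≤ σ (h.pos (⊤, ⊤)) := (h.strictMono_apply_pos_fst ⊤).monotone le_top
      _ < σ (h.pos (⊥, ⊥)) := hlt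
      _ ≤ σ (h.pos (a, ⊥)) := (h.strictMono_apply_pos_fst ⊥).monotone bot_le

theorem eq_extremalPerm_or_symm_eq (h : CyclicESBound σ K L) (hK : 1 < K) :
    σ = extremalPerm K L ∨ σ.symm = extremalPerm K L := by
  have : Nontrivial (Fin (K * L)) :=
    Fin.nontrivial_iff_two_le.2 (le_mul_of_le_of_one_le hK (NeZero.one_le))
  rcases (σ.symm.injective.ne (bot_ne_top (α := Fin (K * L)))).lt_or_gt with hio | hoi
  · exact .inl (h.eq_extremalPerm hio)
  · exact .inr (h.symm.eq_extremalPerm (by simpa using h.apply_bot_lt_apply_top hK hoi))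

end CyclicESBound

namespace List

variable {α : Type*} {r : α → α → Prop}

theorem map_getD_range (b : List α) (d : α) : (range b.length).map (b.getD · d) = b :=
  ext_getElem (by simp) fun i _ hi => by simp [hi]

theorem exists_sublist_pairwise_of_finset (b : List α) (d : α) (S : Finset ℕ)
    (hS : ∀ i ∈ S, i < b.length) (hr : ∀ i ∈ S, ∀ j ∈ S, i < j → r (b.getD i d) (b.getD j d)) :
    ∃ s, s <+ b ∧ s.length = #S ∧ s.Pairwise r := by
  refine ⟨(S.sort).map (b.getD · d), ?_, by simp, ?_⟩
  · have : S.sort <+ range b.length :=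
      sublist_of_subperm_of_pairwise
        ((S.sort_nodup _).subperm fun i hi => mem_range.2 (hS i ((S.mem_sort _).1 hi)))
        S.sortedLT_sort.pairwise pairwise_lt_range
    simpa only [map_getD_range] using this.map (b.getD · d)
  · exact pairwise_map.2 <| S.sortedLT_sort.pairwise.imp_of_mem fun hi hj hij =>
      hr _ ((S.mem_sort _).1 hi) _ ((S.mem_sort _).1 hj) hij

theorem card_lt_of_not_exists_sublist {b : List α} {m : ℕ}
    (hfree : ¬ ∃ s, s <+ b ∧ s.length = m ∧ s.Pairwise r) (d : α) (S : Finset ℕ)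
    (hS : ∀ i ∈ S, i < b.length) (hr : ∀ i ∈ S, ∀ j ∈ S, i < j → r (b.getD i d) (b.getD j d)) :
    #S < m := by
  by_contra hle
  obtain ⟨s, hsub, hlen, hpw⟩ := exists_sublist_pairwise_of_finset b d S hS hr
  exact hfree ⟨s.take m, (take_sublist _ _).trans hsub, by simp [hlen]; omega,
    hpw.sublist (take_sublist _ _)⟩

theorem getD_rotate {b : List α} {d : α} {j u : ℕ} (hu : u < b.length) :
    (b.rotate j).getD u d = b.getD ((u + j) % b.length) d := by
  rw [getD_eq_getElem _ _ (by simpa using hu), getElem_rotate,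
    getD_eq_getElem _ _ (Nat.mod_lt _ (by omega))]

theorem getD_rotate_add_length_sub {b : List α} {d : α} {i j : ℕ} (hij : i < j)
    (hj : j ≤ b.length) : (b.rotate j).getD (i + (b.length - j)) d = b.getD i d := by
  rw [getD_rotate (by omega), show i + (b.length - j) + j = i + b.length by omega,
    Nat.add_mod_right, Nat.mod_eq_of_lt (by omega)]

theorem getD_rotate_sub {b : List α} {d : α} {i j : ℕ} (hji : j ≤ i) (hi : i < b.length) :
    (b.rotate j).getD (i - j) d = b.getD i d := by
  rw [getD_rotate (by omega), Nat.sub_add_cancel hji, Nat.mod_eq_of_lt hi]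

theorem card_add_card_lt_of_not_exists_sublist_rotate {b : List α} {m : ℕ}
    (hfree : ¬ ∃ j s, s <+ b.rotate j ∧ s.length = m ∧ s.Pairwise r) (d : α) (S T : Finset ℕ)
    (hSb : ∀ i ∈ S, i < b.length) (hTb : ∀ i ∈ T, i < b.length) (hST : ∀ i ∈ S, ∀ j ∈ T, i < j)
    (hS : ∀ i ∈ S, ∀ j ∈ S, i < j → r (b.getD i d) (b.getD j d))
    (hT : ∀ i ∈ T, ∀ j ∈ T, i < j → r (b.getD i d) (b.getD j d))
    (hTS : ∀ i ∈ S, ∀ j ∈ T, r (b.getD j d) (b.getD i d)) :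
    #S + #T < m := by
  rcases T.eq_empty_or_nonempty with rfl | hT₀
  · simpa using card_lt_of_not_exists_sublist (fun h => hfree ⟨0, by simpa using h⟩) d S hSb hS
  set n := b.length
  set j := T.min' hT₀
  have hjT : ∀ i ∈ T, j ≤ i := fun i hi => T.min'_le i hi
  have hSj : ∀ i ∈ S, i < j := fun i hi => hST i hi j (T.min'_mem hT₀)
  have hjn : j < n := hTb j (T.min'_mem hT₀)
  -- position `i` of `b` is position `rot i` of `b.rotate j`
  let rot : ℕ → ℕ := fun i => if j ≤ i then i - j else i + (n - j)
  have hmem : ∀ i ∈ S ∪ T, i ∈ S ∧ i < j ∧ rot i = i + (n - j) ∨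
      i ∈ T ∧ j ≤ i ∧ i < n ∧ rot i = i - j := by
    intro i hi
    rcases mem_union.1 hi with hi | hi
    · exact .inl ⟨hi, hSj i hi, if_neg (hSj i hi).not_ge⟩
    · exact .inr ⟨hi, hjT i hi, hTb i hi, if_pos (hjT i hi)⟩
  have hrot : ∀ i ∈ S ∪ T, rot i < n ∧ (b.rotate j).getD (rot i) d = b.getD i d := by
    intro i hi
    rcases hmem i hi with ⟨-, hij, he⟩ | ⟨-, hji, hin, he⟩ <;> rw [he]
    · exact ⟨by omega, getD_rotate_add_length_sub hij hjn.le⟩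
    · exact ⟨by omega, getD_rotate_sub hji hin⟩
  have hinj : Set.InjOn rot ↑(S ∪ T) := by
    intro i hi i' hi' he
    rcases hmem i hi with ⟨-, h₁, h₂⟩ | ⟨-, h₁, h₂, h₃⟩ <;>
      rcases hmem i' hi' with ⟨-, h₄, h₅⟩ | ⟨-, h₄, h₅, h₆⟩ <;> omega
  have hdisj : _root_.Disjoint S T :=
    Finset.disjoint_left.2 fun i hiS hiT => (hSj i hiS).not_ge (hjT i hiT)
  have := card_lt_of_not_exists_sublist (fun h => hfree ⟨j, h⟩) d ((S ∪ T).image rot)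
    (by simpa using fun i hi => (hrot i hi).1) ?_
  · rwa [card_image_of_injOn hinj, card_union_of_disjoint hdisj] at this
  simp only [mem_image, forall_exists_index, and_imp]
  rintro _ i hi rfl _ i' hi' rfl hlt
  rw [(hrot i hi).2, (hrot i' hi').2]
  rcases hmem i hi with ⟨hi, h₁, h₂⟩ | ⟨hi, h₁, h₂, h₃⟩ <;>
    rcases hmem i' hi' with ⟨hi', h₄, h₅⟩ | ⟨hi', h₄, h₅, h₆⟩
  · exact hS i hi i' hi' (by omega)
  · omega
  · exact hTS i' hi' i hi
  · exact hT i hi i' hi' (by omega)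

end List

theorem cyclicIncBound_of_not_exists_sublist {β : Type*} [LinearOrder β] {a : List ℕ} {N K : ℕ}
    {f : Fin N → β} {r : ℕ → ℕ → Prop} (hlen : a.length = N)
    (hf : ∀ x y, f x < f y → r (a.getD x 0) (a.getD y 0))
    (hfree : ¬ ∃ s : List ℕ, s.Sublist a ∧ s.length = K + 1 ∧ s.Pairwise r)
    (hcfree : ¬ ∃ (j : ℕ) (s : List ℕ), s.Sublist (a.rotate j) ∧ s.length = K + 2 ∧ s.Pairwise r) :
    CyclicIncBound f K := by
  have hb (s : Finset (Fin N)) : ∀ i ∈ s.map Fin.valEmbedding, i < a.length := by simp [hlen]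
  have hmap {s t : Finset (Fin N)} {P : ℕ → ℕ → Prop} (h : ∀ x ∈ s, ∀ y ∈ t, P x y) :
      ∀ i ∈ s.map Fin.valEmbedding, ∀ j ∈ t.map Fin.valEmbedding, P i j := by
    simpa using h
  refine ⟨fun s hs => ?_, fun s t hs ht hst => ?_⟩
  · have := List.card_lt_of_not_exists_sublist hfree 0 _ (hb s)
      (hmap fun x hx y hy hxy => hf x y (hs hx hy hxy))
    rw [card_map] at this
    omega
  · have := List.card_add_card_lt_of_not_exists_sublist_rotate hcfree 0 _ _ (hb s) (hb t)
      (hmap fun x hx y hy => (hst x hx y hy).1)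
      (hmap fun x hx y hy hxy => hf x y (hs hx hy hxy))
      (hmap fun x hx y hy hxy => hf x y (ht hx hy hxy))
      (hmap fun x hx y hy => hf y x (hst x hx y hy).2)
    rw [card_map, card_map] at this
    omega

theorem exists_perm_getD_eq {a : List ℕ} {N : ℕ} (hperm : a.Perm (List.range' 1 N)) :
    ∃ σ : Equiv.Perm (Fin N), ∀ x : Fin N, a.getD x 0 = σ x + 1 := by
  have hlen : a.length = N := by simpa using hperm.length_eq
  have hval : ∀ x : Fin N, 1 ≤ a.getD x 0 ∧ a.getD x 0 < N + 1 := fun x => by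
    have := hperm.subset
      (by rw [List.getD_eq_getElem _ _ (by omega)]; exact List.getElem_mem _ : a.getD x 0 ∈ a)
    rw [List.mem_range'_1] at this
    omega
  let f : Fin N → Fin N := fun x => ⟨a.getD x 0 - 1, by have := hval x; omega⟩
  have hf : Function.Injective f := fun x y hxy => by
    have h1 := hval x
    have h2 := hval y
    have : a.getD x 0 = a.getD y 0 := by simp only [f, Fin.mk.injEq] at hxy; omega
    rw [List.getD_eq_getElem _ _ (by omega), List.getD_eq_getElem _ _ (by omega)] at this
    exact Fin.ext ((hperm.nodup_iff.2 List.nodup_range').getElem_inj_iff.1 this)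
  exact ⟨Equiv.ofBijective f (Finite.injective_iff_bijective.1 hf), fun x => by
    have := hval x
    simp only [Equiv.ofBijective_apply, f]
    omega⟩

theorem cyclicESBound_of_getD_eq {a : List ℕ} {N K L : ℕ} {σ : Equiv.Perm (Fin N)}
    (hlen : a.length = N) (hσ : ∀ x : Fin N, a.getD x 0 = σ x + 1)
    (hinc : ¬ ∃ s : List ℕ, s.Sublist a ∧ s.length = K + 1 ∧ s.Pairwise (· < ·))
    (hdec : ¬ ∃ s : List ℕ, s.Sublist a ∧ s.length = L + 1 ∧ s.Pairwise (· > ·))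
    (hcinc : ¬ IncCycSub a (K + 2)) (hcdec : ¬ DecCycSub a (L + 2)) :
    CyclicESBound σ K L := by
  have hlt {x y : Fin N} (hxy : σ x < σ y) : a.getD x 0 < a.getD y 0 := by
    rw [hσ, hσ]
    exact Nat.succ_lt_succ hxy
  exact ⟨cyclicIncBound_of_not_exists_sublist hlen (fun _ _ => hlt) hinc hcinc,
    cyclicIncBound_of_not_exists_sublist hlen (fun _ _ => hlt) hdec hcdec⟩

theorem extremal_characterization (k ℓ : ℕ) (hk : 3 ≤ k) (hl : 3 ≤ ℓ) (a : List ℕ)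
    (hperm : a.Perm (List.range' 1 ((k-1)*(ℓ-1))))
    (hinc : ¬ ∃ s : List ℕ, s.Sublist a ∧ s.length = k ∧ s.Pairwise (· < ·))
    (hdec : ¬ ∃ s : List ℕ, s.Sublist a ∧ s.length = ℓ ∧ s.Pairwise (· > ·))
    (hcinc : ¬ IncCycSub a (k+1)) (hcdec : ¬ DecCycSub a (ℓ+1)) :
    (∀ i ∈ Finset.Icc 1 (ℓ-1), ∀ j ∈ Finset.Icc 1 (k-1),
      a.getD ((j-1)*(ℓ-1)+i-1) 0 = (ℓ-1-i)*(k-1)+j) ∨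
    (∀ i ∈ Finset.Icc 1 (ℓ-1), ∀ j ∈ Finset.Icc 1 (k-1),
      a.getD ((i-1)*(k-1)+j-1) 0 = (j-1)*(ℓ-1)+(ℓ-i)) := by
  obtain ⟨K, rfl⟩ : ∃ K, k = K + 1 := ⟨k - 1, by omega⟩
  obtain ⟨L, rfl⟩ : ∃ L, ℓ = L + 1 := ⟨ℓ - 1, by omega⟩
  simp only [Nat.add_sub_cancel, Finset.mem_Icc] at hperm ⊢
  have : NeZero K := ⟨by omega⟩
  have : NeZero L := ⟨by omega⟩
  obtain ⟨σ, hσ⟩ := exists_perm_getD_eq hperm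
  have h : CyclicESBound σ K L :=
    cyclicESBound_of_getD_eq (by simpa using hperm.length_eq) hσ hinc hdec hcinc hcdec
  rcases h.eq_extremalPerm_or_symm_eq (by omega) with hE | hE
  · refine .inl fun i hi j hj => ?_
    have := hσ (finProdFinEquiv (⟨j - 1, by omega⟩, ⟨i - 1, by omega⟩))
    rw [hE, val_extremalPerm_finProdFinEquiv, finProdFinEquiv_apply_val] at this
    rw [show (j - 1) * L + i - 1 = i - 1 + L * (j - 1) by rw [Nat.mul_comm]; omega,
      show (L - i) * K + j = j - 1 + K * (L - 1 - (i - 1)) + 1 by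
        rw [show L - 1 - (i - 1) = L - i by omega, Nat.mul_comm]; omega]
    exact this
  · refine .inr fun i hi j hj => ?_
    have := hσ (extremalPerm K L (finProdFinEquiv (⟨j - 1, by omega⟩, ⟨L - i, by omega⟩)))
    rw [← hE, Equiv.apply_symm_apply, hE, val_extremalPerm_finProdFinEquiv,
      finProdFinEquiv_apply_val] at this
    rw [show (i - 1) * K + j - 1 = j - 1 + K * (L - 1 - (L - i)) by
        rw [show L - 1 - (L - i) = i - 1 by omega, Nat.mul_comm]; omega,
      show (j - 1) * L + (L + 1 - i) = L - i + L * (j - 1) + 1 by rw [Nat.mul_comm]; omega]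
    exact this
end

section
/- Every cyclic permutation of {1,...,n} with n ≥ 3 that is not the increasing cyclic permutation (1,2,...,n) contains a decreasing cyclic sub-permutation of length 3, and every cyclic permutation of length n ≥ 3 that is not the decreasing cyclic permutation (n,n-1,...,1) contains an increasing cyclic sub-permutation of length 3. -/
namespace List

theorem exists_pair_sublist_not_rel_of_not_isChain {α : Type*} {R : α → α → Prop}
    {l : List α} (h : ¬ l.IsChain R) : ∃ a b, [a, b] <+ l ∧ ¬ R a b := by
  rw [isChain_iff_forall_rel_of_append_cons_cons] at h
  push Not at h
  obtain ⟨a, b, l₁, l₂, rfl, hab⟩ := h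
  have hinfix : [a, b] <:+: l₁ ++ a :: b :: l₂ := ⟨l₁, l₂, by simp⟩
  exact ⟨a, b, hinfix.sublist, hab⟩

theorem exists_rotate_eq_cons_of_mem {α : Type*} {l : List α} {a : α} (h : a ∈ l) :
    ∃ r d, l.rotate r = a :: d := by
  obtain ⟨l₁, l₂, rfl⟩ := append_of_mem h
  exact ⟨l₁.length, l₂ ++ l₁, rotate_append_length_eq l₁ (a :: l₂)⟩

variable {α : Type*} [LinearOrder α] {l : List α}

theorem Nodup.exists_rotate_pairwise_lt_or_exists_triple_gt (hl : l.Nodup) :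
    (∃ r, (l.rotate r).Pairwise (· < ·)) ∨
      ∃ r s, s <+ l.rotate r ∧ s.length = 3 ∧ s.Pairwise (· > ·) := by
  rcases eq_or_ne l [] with rfl | hne
  · exact .inl ⟨0, Pairwise.nil⟩
  obtain ⟨m, hm_mem, hm_le⟩ : ∃ m ∈ l, ∀ x ∈ l, m ≤ x :=
    ⟨l.min hne, min_mem hne, fun _ => min_le_of_mem⟩
  obtain ⟨r, d, hrot⟩ := exists_rotate_eq_cons_of_mem hm_mem
  have hnd : (m :: d).Nodup := hrot ▸ nodup_rotate.mpr hl
  have hm_lt : ∀ x ∈ d, m < x := fun x hx =>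
    (hm_le x (mem_rotate.mp (hrot ▸ mem_cons_of_mem m hx))).lt_of_ne
      fun hmx => (nodup_cons.mp hnd).1 (hmx ▸ hx)
  by_cases hd : d.IsChain (· < ·)
  · refine .inl ⟨r, hrot ▸ isChain_iff_pairwise.mp (isChain_cons.mpr ⟨?_, hd⟩)⟩
    exact fun y hy => hm_lt y (mem_of_mem_head? hy)
  · obtain ⟨a, b, hab, hnot⟩ := exists_pair_sublist_not_rel_of_not_isChain hd
    have hba : b < a := (not_lt.mp hnot).lt_of_ne fun h => by
      simpa [h] using hab.nodup (nodup_cons.mp hnd).2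
    have hmb : m < b := hm_lt b (hab.subset (by simp))
    have hrot' : l.rotate (r + 1) = d ++ [m] := by
      rw [← rotate_rotate, hrot, rotate_cons_succ, rotate_zero]
    refine .inr ⟨r + 1, [a, b, m], hrot' ▸ hab.append (Sublist.refl [m]), rfl, ?_⟩
    simp [hba, hmb, hmb.trans hba]

theorem Nodup.exists_rotate_pairwise_gt_or_exists_triple_lt (hl : l.Nodup) :
    (∃ r, (l.rotate r).Pairwise (· > ·)) ∨
      ∃ r s, s <+ l.rotate r ∧ s.length = 3 ∧ s.Pairwise (· < ·) :=
  Nodup.exists_rotate_pairwise_lt_or_exists_triple_gt (α := αᵒᵈ) hl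

end List

open List in
theorem non_monotone_has_three_general (n : ℕ) (c : List ℕ)
    (hc : c.Perm (List.range' 1 n)) :
    (¬ c.IsRotated (List.range' 1 n) → DecCycSub c 3) ∧
    (¬ c.IsRotated ((List.range' 1 n).reverse) → IncCycSub c 3) := by
  have hnd : c.Nodup := hc.nodup_iff.mpr nodup_range'
  have hperm (r : ℕ) : c.rotate r ~ range' 1 n := (rotate_perm c r).trans hc
  refine ⟨fun hinc => hnd.exists_rotate_pairwise_lt_or_exists_triple_gt.resolve_left ?_,
    fun hdec => hnd.exists_rotate_pairwise_gt_or_exists_triple_lt.resolve_left ?_⟩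
  · rintro ⟨r, hr⟩
    exact hinc ⟨r, (hperm r).eq_of_sortedLE hr.sortedLT.sortedLE (sortedLE_range' 1 n 1)⟩
  · rintro ⟨r, hr⟩
    refine hdec ⟨r, ((hperm r).trans (reverse_perm _).symm).eq_of_sortedGE ?_ ?_⟩
    · exact hr.sortedGT.sortedGE
    · exact sortedGE_reverse.mpr (sortedLE_range' 1 n 1)

theorem non_monotone_has_three (n : ℕ) (hn : 3 ≤ n) (c : List ℕ)
    (hc : c.Perm (List.range' 1 n)) :
    (¬ c.IsRotated (List.range' 1 n) → DecCycSub c 3) ∧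
    (¬ c.IsRotated ((List.range' 1 n).reverse) → IncCycSub c 3) :=
  non_monotone_has_three_general n c hc
end

section
/- Let a = [a_1,...,a_n] be a sequence of distinct numbers that is partitioned into k-1 decreasing blocks of consecutive entries, where each block consists of ℓ-1 consecutive entries of a (block i occupying positions (i-1)(ℓ-1)+1 through i(ℓ-1)), with n = (k-1)(ℓ-1). Then every increasing cyclic sub-permutation of the cyclic permutation (m, a_1, ..., a_n), where m is smaller than all a_t, has length at most k, provided it contains m; and any increasing cyclic sub-permutation avoiding m has length at most k as well. -/
/-!
An increasing subsequence meets each decreasing block in at most one entry. Rotating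
`(m, a₁, …, aₙ)` puts a suffix of `a`, then `m`, then a prefix of `a`. If the subsequence
contains `m`, nothing can precede it, and the rest lies in a prefix of `a`, which meets at
most `k - 1` blocks. Otherwise the subsequence lies in a suffix followed by a prefix of `a`;
only the block cut by the rotation meets both, so at most `k` entries are taken.
-/

theorem List.Sublist.length_le_card_of_pairwise_lt {α β : Type*} [Preorder α]
    {s l : List α} (hs : s.Sublist l) (hsort : s.Pairwise (· < ·)) (g : ℕ → β)
    (T : Finset β) (hgT : ∀ i < l.length, g i ∈ T)
    (hanti : ∀ i j (hij : i < j) (hj : j < l.length), g i = g j → l[j] < l[i]) :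
    s.length ≤ T.card := by
  obtain ⟨f, hf⟩ := List.sublist_iff_exists_fin_orderEmbedding_get_eq.mp hs
  have hne : ∀ i j : Fin s.length, i < j → g (f i) ≠ g (f j) := by
    intro i j hij heq
    have hlt : s.get i < s.get j := hsort.sortedLT.strictMono_get hij
    rw [hf, hf] at hlt
    exact lt_asymm hlt (hanti _ _ (f.strictMono hij) (f j).isLt heq)
  have hinj : Function.Injective fun i => g (f i) := by
    intro i j heq
    by_contra hij
    rcases lt_or_gt_of_ne hij with hlt | hlt
    exacts [hne _ _ hlt heq, hne _ _ hlt heq.symm]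
  calc s.length = (Finset.univ : Finset (Fin s.length)).card := by simp
    _ ≤ T.card := Finset.card_le_card_of_injOn _ (fun i _ => hgT _ (f i).isLt) hinj.injOn

theorem List.exists_rotate_cons_eq {α : Type*} (x : α) (l : List α) (r : ℕ) :
    ∃ d ≤ l.length, (x :: l).rotate r = l.drop d ++ x :: l.take d := by
  rw [← List.rotate_mod]
  have hlt : r % (x :: l).length < l.length + 1 := Nat.mod_lt _ (by simp)
  rcases h : r % (x :: l).length with _ | d
  · exact ⟨l.length, le_rfl, by simp⟩
  · refine ⟨d, by omega, ?_⟩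
    rw [List.rotate_cons_succ, List.rotate_eq_drop_append_take
      (by simp only [List.length_append, List.length_singleton]; omega)]
    simp [List.drop_append_of_le_length (show d ≤ l.length by omega),
      List.take_append_of_le_length (show d ≤ l.length by omega)]

def BlockDecreasing (P : ℕ) (a : List ℕ) : Prop :=
  ∀ u v (huv : u < v) (hv : v < a.length), u / P = v / P → a[v] < a[u]

theorem blockDecreasing_of_getD_lt {a : List ℕ} {b P : ℕ} (ha : a.length ≤ b * P)
    (hblocks : ∀ i ∈ Finset.Icc 1 b, ∀ t, (i-1)*P+1 ≤ t → t < i*P →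
      a.getD t 0 < a.getD (t-1) 0) :
    BlockDecreasing P a := by
  intro u v huv hv hdiv
  have hP : 0 < P := Nat.pos_of_mul_pos_left (by omega : 0 < b * P)
  have hstep : ∀ t, u < t → t ≤ v → a.getD t 0 < a.getD (t - 1) 0 := by
    intro t hut htv
    have ht : t / P = u / P :=
      le_antisymm (hdiv ▸ Nat.div_le_div_right htv) (Nat.div_le_div_right hut.le)
    have hq : u / P < b := hdiv ▸ (Nat.div_lt_iff_lt_mul hP).mpr (hv.trans_le ha)
    refine hblocks (u / P + 1) (Finset.mem_Icc.mpr ⟨Nat.le_add_left 1 _, hq⟩) t ?_ ?_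
    · rw [Nat.add_sub_cancel]
      exact (Nat.div_mul_le_self u P).trans_lt hut
    · simpa only [ht, mul_comm] using Nat.lt_mul_div_succ t hP
  have hchain : ∀ w, u + 1 ≤ w → w ≤ v → a.getD w 0 < a.getD u 0 := by
    intro w huw
    induction w, huw using Nat.le_induction with
    | base => exact hstep (u + 1) (Nat.lt_succ_self u)
    | succ w huw ih =>
      exact fun h => (hstep (w + 1) (by omega) h).trans (ih (by omega))
  simpa [List.getD_eq_getElem, hv, huv.trans hv] using hchain v huv le_rfl

namespace BlockDecreasing

variable {P b : ℕ} {a t : List ℕ}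

theorem length_le_of_sublist_drop (h : BlockDecreasing P a) (ha : a.length ≤ b * P) {d : ℕ}
    (ht : t.Sublist (a.drop d)) (hsort : t.Pairwise (· < ·)) : t.length ≤ b - d / P := by
  have hcard := ht.length_le_card_of_pairwise_lt hsort (fun i => (d + i) / P)
    (Finset.Ico (d / P) b) ?_ ?_
  · simpa using hcard
  · intro i hi
    simp only [List.length_drop] at hi
    have hP : 0 < P := Nat.pos_of_mul_pos_left (by omega : 0 < b * P)
    exact Finset.mem_Ico.mpr ⟨Nat.div_le_div_right (by omega),
      (Nat.div_lt_iff_lt_mul hP).mpr (by omega)⟩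
  · intro i j hij hj hdiv
    simp only [List.getElem_drop]
    exact h _ _ (by omega) (by simp only [List.length_drop] at hj; omega) hdiv

theorem length_le_of_sublist_take (h : BlockDecreasing P a) (ha : a.length ≤ b * P) {d : ℕ}
    (ht : t.Sublist (a.take d)) (hsort : t.Pairwise (· < ·)) :
    t.length ≤ min b (d / P + 1) := by
  have hcard := ht.length_le_card_of_pairwise_lt hsort (· / P)
    (Finset.range (min b (d / P + 1))) ?_ ?_
  · simpa using hcard
  · intro i hi
    simp only [List.length_take] at hi
    have hP : 0 < P := Nat.pos_of_mul_pos_left (by omega : 0 < b * P)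
    simp only [Finset.mem_range, lt_min_iff, Nat.lt_succ_iff]
    exact ⟨(Nat.div_lt_iff_lt_mul hP).mpr (by omega), Nat.div_le_div_right (by omega)⟩
  · intro i j hij hj hdiv
    simp only [List.getElem_take]
    exact h _ _ hij (by simp only [List.length_take] at hj; omega) hdiv

end BlockDecreasing

theorem blocks_bound_increasing_general (k ℓ : ℕ) (hk : 1 ≤ k)
    (a : List ℕ) (m : ℕ) (ha : a.length = (k-1)*(ℓ-1))
    (hm : ∀ x ∈ a, m < x)
    (hblocks : ∀ i ∈ Finset.Icc 1 (k-1), ∀ t, (i-1)*(ℓ-1)+1 ≤ t → t < i*(ℓ-1) →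
      a.getD t 0 < a.getD (t-1) 0) :
    ∀ (r : ℕ) (s : List ℕ), s.Sublist ((m :: a).rotate r) → s.Pairwise (· < ·) → s.length ≤ k := by
  intro r s hs hsort
  have hdec := blockDecreasing_of_getD_lt ha.le hblocks
  obtain ⟨d, -, hrot⟩ := a.exists_rotate_cons_eq m r
  rw [hrot, List.sublist_append_iff] at hs
  obtain ⟨s₁, s₂, rfl, hs₁, hs₂⟩ := hs
  rw [List.pairwise_append] at hsort
  rcases List.sublist_cons_iff.mp hs₂ with hs₂ | ⟨t, rfl, ht⟩
  · have h₁ := hdec.length_le_of_sublist_drop ha.le hs₁ hsort.1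
    have h₂ := hdec.length_le_of_sublist_take ha.le hs₂ hsort.2.1
    rw [List.length_append]
    omega
  · have hnil : s₁ = [] := List.eq_nil_iff_forall_not_mem.mpr fun x hx =>
      (hm x (List.mem_of_mem_drop (hs₁.subset hx))).not_gt
        (hsort.2.2 x hx m List.mem_cons_self)
    have h₂ := hdec.length_le_of_sublist_take ha.le ht (List.pairwise_cons.mp hsort.2.1).2
    subst hnil
    simp only [List.nil_append, List.length_cons]
    omega

theorem blocks_bound_increasing (k ℓ : ℕ) (hk : 1 ≤ k) (hl : 1 ≤ ℓ)
    (a : List ℕ) (m : ℕ) (ha : a.length = (k-1)*(ℓ-1)) (hnd : a.Nodup)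
    (hm : ∀ x ∈ a, m < x)
    (hblocks : ∀ i ∈ Finset.Icc 1 (k-1), ∀ t, (i-1)*(ℓ-1)+1 ≤ t → t < i*(ℓ-1) →
      a.getD t 0 < a.getD (t-1) 0) :
    ∀ (r : ℕ) (s : List ℕ), s.Sublist ((m :: a).rotate r) → s.Pairwise (· < ·) → s.length ≤ k :=
  blocks_bound_increasing_general k ℓ hk a m ha hm hblocks
end
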